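/- Let q_1, ..., q_n : ℝ^n → ℝ be positive semidefinite quadratic forms and suppose q_n(x) = ⟨u, x⟩^2 for a unit vector u ∈ ℝ^n. Let H = u^⊥ and let q̂_1, ..., q̂_{n-1} : H → ℝ be the restrictions of q_1, ..., q_{n-1} to H. Then D(q_1, ..., q_n) = D(q̂_1, ..., q̂_{n-1}), where the mixed discriminant of the restricted forms is computed with respect to any orthonormal basis of H. -/

import Mathlib

/-!
Let `R` be the orthogonal matrix with rows `u, b 0, …, b (m-1)`. Since
`D (A Q₁ B, …, A Qₙ B) = det A · det B · D (Q₁, …, Qₙ)`, conjugating every `Qᵢ` by `R` leaves the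
mixed discriminant unchanged and turns `u uᵀ` into the matrix unit `E₀₀`. Expanding `D` as the sum
over permutations `σ` of the determinants whose `j`-th row is taken from `Q_{σ j}`, only the terms
taking row `0` from `E₀₀` survive, and Laplace expansion along that row leaves the mixed
discriminant of the lower right blocks, whose entries are `b j ⬝ᵥ Qᵢ *ᵥ b k`.
-/

open Matrix

/-- The mixed discriminant of `n` real `n x n` matrices: the coefficient of the monomial
`t_1 t_2 ... t_n` in `det (t_1 Q_1 + ... + t_n Q_n)`. -/
noncomputable def mixedDiscriminant {n : ℕ} (Q : Fin n → Matrix (Fin n) (Fin n) ℝ) : ℝ :=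
  MvPolynomial.coeff (∑ i : Fin n, Finsupp.single i 1)
    (Matrix.det (∑ i, (MvPolynomial.X i : MvPolynomial (Fin n) ℝ) • (Q i).map MvPolynomial.C))

open MvPolynomial

theorem Finsupp.sum_single_comp_eq_sum_single_iff_bijective {ι : Type*} [Fintype ι]
    [DecidableEq ι] (r : ι → ι) :
    ∑ j, Finsupp.single (r j) 1 = ∑ i, Finsupp.single i (1 : ℕ) ↔ r.Bijective := by
  simp only [Finsupp.ext_iff, Finsupp.coe_finsetSum, Finset.sum_apply, Finsupp.single_apply,
    Finset.sum_ite_eq', Finset.mem_univ, if_true, Finset.sum_boole, Nat.cast_id,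
    Function.bijective_iff_existsUnique, Fintype.existsUnique_iff_card_one]

theorem MvPolynomial.coeff_sum_single_prod_X {ι R : Type*} [Fintype ι] [DecidableEq ι]
    [CommSemiring R] (r : ι → ι) :
    coeff (∑ i, Finsupp.single i 1) (∏ j, (X (r j) : MvPolynomial ι R)) =
      if r.Bijective then 1 else 0 := by
  simp only [X, ← monomial_sum_one, coeff_monomial,
    Finsupp.sum_single_comp_eq_sum_single_iff_bijective]

theorem Matrix.det_sum_smul {ι R : Type*} [Fintype ι] [DecidableEq ι] [CommRing R]
    (c : ι → R) (Q : ι → Matrix ι ι R) :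
    det (∑ i, c i • Q i) = ∑ r : ι → ι, (∏ j, c (r j)) * det (of fun j k => Q (r j) j k) := by
  have hrows : ∑ i, c i • Q i = of fun j => ∑ i, c i • Q i j := by
    ext j k; simp [Matrix.sum_apply]
  rw [hrows]
  refine ((detRowAlternating : (ι → R) [⋀^ι]→ₗ[R] R).toMultilinearMap.map_sum
    fun j i => c i • Q i j).trans (Finset.sum_congr rfl fun r _ => ?_)
  exact (detRowAlternating.toMultilinearMap.map_smul_univ _ _).trans (smul_eq_mul _ _)

theorem mixedDiscriminant_eq_sum_perm {n : ℕ} (Q : Fin n → Matrix (Fin n) (Fin n) ℝ) :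
    mixedDiscriminant Q = ∑ σ : Equiv.Perm (Fin n), det (of fun j k => Q (σ j) j k) := by
  have hmap (r : Fin n → Fin n) :
      (of fun j k => (Q (r j)).map (C : ℝ →+* MvPolynomial (Fin n) ℝ) j k) =
        C.mapMatrix (of fun j k => Q (r j) j k) := rfl
  simp only [mixedDiscriminant, det_sum_smul, hmap, ← RingHom.map_det, coeff_sum,
    mul_comm _ (C _), coeff_C_mul, coeff_sum_single_prod_X, mul_ite, mul_one, mul_zero,
    ← Finset.sum_filter]
  rw [Finset.sum_subtype _ (p := Function.Bijective) (by simp)]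
  exact (Equiv.sum_comp (Equiv.bijectiveEquiv (α := Fin n) (β := Fin n)).symm _).symm

theorem mixedDiscriminant_comp_perm {n : ℕ} (Q : Fin n → Matrix (Fin n) (Fin n) ℝ)
    (π : Equiv.Perm (Fin n)) : mixedDiscriminant (Q ∘ π) = mixedDiscriminant Q := by
  simp only [mixedDiscriminant_eq_sum_perm]
  exact Fintype.sum_equiv (Equiv.mulLeft π) _ _ fun σ => rfl

theorem mixedDiscriminant_mul_mul {n : ℕ} (A B : Matrix (Fin n) (Fin n) ℝ)
    (Q : Fin n → Matrix (Fin n) (Fin n) ℝ) :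
    mixedDiscriminant (fun i => A * Q i * B) = A.det * B.det * mixedDiscriminant Q := by
  let CC : ℝ →+* MvPolynomial (Fin n) ℝ := C
  have hpencil : ∑ i, (X i : MvPolynomial (Fin n) ℝ) • (A * Q i * B).map CC =
      A.map CC * (∑ i, (X i : MvPolynomial (Fin n) ℝ) • (Q i).map CC) * B.map CC := by
    simp only [Matrix.mul_sum, Finset.sum_mul, Matrix.map_mul, Matrix.mul_smul, Matrix.smul_mul]
  rw [mixedDiscriminant, hpencil, det_mul, det_mul, ← RingHom.mapMatrix_apply,
    ← RingHom.mapMatrix_apply, ← RingHom.map_det, ← RingHom.map_det, mul_right_comm, ← map_mul,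
    coeff_C_mul, mixedDiscriminant]

theorem mixedDiscriminant_eq_of_apply_zero_eq_single {m : ℕ}
    (A : Fin (m + 1) → Matrix (Fin (m + 1)) (Fin (m + 1)) ℝ) (hA : A 0 = single 0 0 1) :
    mixedDiscriminant A = mixedDiscriminant fun i => (A i.succ).submatrix Fin.succ Fin.succ := by
  have hvanish (σ : Equiv.Perm (Fin (m + 1))) (hσ : σ 0 ≠ 0) :
      det (of fun j k => A (σ j) j k) = 0 := by
    have hrow : σ.symm 0 ≠ 0 := fun h => hσ (σ.symm_apply_eq.mp h).symm
    exact det_eq_zero_of_row_eq_zero (σ.symm 0) fun k => by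
      simp [hA, single_apply_of_row_ne hrow.symm]
  have hexpand (σ : Equiv.Perm (Fin (m + 1))) (hσ : σ 0 = 0) :
      det (of fun j k => A (σ j) j k) =
        det (of fun j k : Fin m => A (σ j.succ) j.succ k.succ) := by
    rw [det_succ_row_zero, Fintype.sum_eq_single 0 fun k hk => by
      simp [hσ, hA, single_apply_of_col_ne _ _ (Ne.symm hk)]]
    simp only [Fin.val_zero, pow_zero, of_apply, hσ, hA, single_apply_same, mul_one,
      Fin.succAbove_zero, one_mul]
    rfl
  rw [mixedDiscriminant_eq_sum_perm, mixedDiscriminant_eq_sum_perm,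
    ← Equiv.sum_comp Equiv.Perm.decomposeFin.symm, Fintype.sum_prod_type,
    Fintype.sum_eq_single 0 fun p hp =>
      Finset.sum_eq_zero fun τ _ => hvanish _ (by simpa using hp)]
  refine Finset.sum_congr rfl fun τ _ => ?_
  rw [hexpand _ (by simp)]
  simp

theorem mixedDiscriminant_eq_of_apply_eq_single {m : ℕ}
    (A : Fin (m + 1) → Matrix (Fin (m + 1)) (Fin (m + 1)) ℝ) (p : Fin (m + 1))
    (hA : A p = single 0 0 1) :
    mixedDiscriminant A =
      mixedDiscriminant fun i => (A (p.succAbove i)).submatrix Fin.succ Fin.succ := by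
  rw [← mixedDiscriminant_comp_perm A p.cycleRange.symm,
    mixedDiscriminant_eq_of_apply_zero_eq_single _ (by simpa using hA)]
  simp

theorem Orthonormal.mul_transpose_eq_one {ι n : Type*} [Fintype n] [DecidableEq ι]
    {v : ι → EuclideanSpace ℝ n} (hv : Orthonormal ℝ v) :
    (of fun i => (v i).ofLp) * (of fun i => (v i).ofLp)ᵀ = 1 := by
  ext i j
  rw [mul_apply, one_apply, ← orthonormal_iff_ite.mp hv]
  simp [EuclideanSpace.inner_eq_star_dotProduct, dotProduct, mul_comm]

theorem mixedDiscriminant_restrict_hyperplane_general {m : ℕ}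
    (Q : Fin (m + 1) → Matrix (Fin (m + 1)) (Fin (m + 1)) ℝ)
    (u : EuclideanSpace ℝ (Fin (m + 1))) (hu : ‖u‖ = 1)
    (hlast : Q (Fin.last m) = Matrix.vecMulVec u u)
    (b : Fin m → EuclideanSpace ℝ (Fin (m + 1)))
    (hb : Orthonormal ℝ b) (hbu : ∀ j, @inner ℝ _ _ u (b j) = 0) :
    mixedDiscriminant Q =
      mixedDiscriminant (fun i : Fin m =>
        Matrix.of fun j k : Fin m => b j ⬝ᵥ Q i.castSucc *ᵥ b k) := by
  set R : Matrix (Fin (m + 1)) (Fin (m + 1)) ℝ := of fun a => (vecCons u b a).ofLp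
  have hR : R * Rᵀ = 1 := (orthonormal_vecCons_iff.mpr ⟨hu, hbu, hb⟩).mul_transpose_eq_one
  have hRu : R *ᵥ u = Pi.single 0 1 := by
    rw [show u.ofLp = Rᵀ *ᵥ Pi.single 0 1 by rw [mulVec_single_one]; rfl, mulVec_mulVec, hR,
      one_mulVec]
  have hRlast : R * Q (Fin.last m) * Rᵀ = single 0 0 1 := by
    rw [hlast, mul_vecMulVec, vecMulVec_mul, vecMul_transpose, hRu,
      single_eq_single_vecMulVec_single]
  calc mixedDiscriminant Q = mixedDiscriminant fun i => R * Q i * Rᵀ := by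
        rw [mixedDiscriminant_mul_mul, ← det_mul, hR, det_one, one_mul]
    _ = _ := mixedDiscriminant_eq_of_apply_eq_single _ _ hRlast
    _ = _ := by
      congr
      ext i j k
      simp only [submatrix_apply, mul_mul_apply, transpose_transpose, Fin.succAbove_last,
        of_apply]
      rfl

theorem mixedDiscriminant_restrict_hyperplane {m : ℕ}
    (Q : Fin (m + 1) → Matrix (Fin (m + 1)) (Fin (m + 1)) ℝ)
    (hpsd : ∀ i, (Q i).PosSemidef)
    (u : EuclideanSpace ℝ (Fin (m + 1))) (hu : ‖u‖ = 1)
    (hlast : Q (Fin.last m) = Matrix.vecMulVec u u)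
    (b : Fin m → EuclideanSpace ℝ (Fin (m + 1)))
    (hb : Orthonormal ℝ b) (hbu : ∀ j, @inner ℝ _ _ u (b j) = 0) :
    mixedDiscriminant Q =
      mixedDiscriminant (fun i : Fin m =>
        Matrix.of fun j k : Fin m => b j ⬝ᵥ Q i.castSucc *ᵥ b k) :=
  mixedDiscriminant_restrict_hyperplane_general Q u hu hlast b hb hbu
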